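/- Let f : X → Y be a surjective, quasi-compact continuous map of topological spaces (preimages of quasi-compact opens are quasi-compact). If quasi-compact open subsets form a basis of Y and X is locally connected, then Y is locally connected. -/

import Mathlib

/-!
For a quasi-compact open `W ⊆ Y`, the preimage `f ⁻¹' W` is a compact locally connected space,
so it has finitely many connected components. Since `f` maps it continuously onto `W`, the
subspace `W` has finitely many components as well. Components are closed, so finitely many of
them are also open. Taking `W` inside a given neighbourhood of `y`, the component of `y` in `W`
is an open connected neighbourhood of `y` inside it.
-/

open Topology

section

variable {α β : Type*} [TopologicalSpace α] [TopologicalSpace β]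

instance ConnectedComponents.t1Space : T1Space (ConnectedComponents α) := by
  refine ⟨fun c ↦ ?_⟩
  obtain ⟨x, rfl⟩ := ConnectedComponents.surjective_coe c
  rw [← ConnectedComponents.isQuotientMap_coe.isClosed_preimage,
    connectedComponents_preimage_singleton]
  exact isClosed_connectedComponent

theorem isOpen_connectedComponent_of_finite [Finite (ConnectedComponents α)] (x : α) :
    IsOpen (connectedComponent x) :=
  ConnectedComponents.discreteTopology_iff.1 inferInstance x

theorem IsOpen.isOpen_connectedComponentIn_of_finite {W : Set α} (hW : IsOpen W)
    [Finite (ConnectedComponents W)] (x : α) : IsOpen (connectedComponentIn W x) := by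
  by_cases hx : x ∈ W
  · rw [connectedComponentIn_eq_image hx]
    exact hW.isOpenMap_subtype_val _ (isOpen_connectedComponent_of_finite _)
  · rw [connectedComponentIn_eq_empty hx]
    exact isOpen_empty

theorem Continuous.finite_connectedComponents_of_surjective [Finite (ConnectedComponents α)]
    {f : α → β} (hf : Continuous f) (hsurj : Function.Surjective f) :
    Finite (ConnectedComponents β) :=
  .of_surjective _ (hf.connectedComponentsMap_surjective hsurj)

theorem locallyConnectedSpace_of_exists_finite_connectedComponents
    (h : ∀ y : α, ∀ U ∈ 𝓝 y, ∃ W : Set α, IsOpen W ∧ y ∈ W ∧ W ⊆ U ∧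
      Finite (ConnectedComponents W)) :
    LocallyConnectedSpace α := by
  rw [locallyConnectedSpace_iff_subsets_isOpen_isConnected]
  intro y U hU
  obtain ⟨W, hW, hyW, hWU, hfin⟩ := h y U hU
  exact ⟨connectedComponentIn W y, (connectedComponentIn_subset W y).trans hWU,
    hW.isOpen_connectedComponentIn_of_finite y, mem_connectedComponentIn hyW,
    isConnected_connectedComponentIn_iff.2 hyW⟩

end

/-- If `f : X → Y` is a surjective, quasi-compact continuous map, quasi-compact open subsets
form a basis of `Y`, and `X` is locally connected, then `Y` is locally connected. -/
theorem stmt_7 (X Y : Type*) [TopologicalSpace X] [TopologicalSpace Y] (f : X → Y)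
    (hf : Continuous f) (hsurj : Function.Surjective f)
    (hqc : ∀ V : Set Y, IsOpen V → IsCompact V → IsCompact (f ⁻¹' V))
    (hbasis : ∀ (y : Y) (V : Set Y), V ∈ nhds y →
      ∃ W : Set Y, IsOpen W ∧ IsCompact W ∧ y ∈ W ∧ W ⊆ V)
    [LocallyConnectedSpace X] :
    LocallyConnectedSpace Y := by
  refine locallyConnectedSpace_of_exists_finite_connectedComponents fun y U hU ↦ ?_
  obtain ⟨W, hW, hWc, hyW, hWU⟩ := hbasis y U hU
  have : CompactSpace (f ⁻¹' W) := isCompact_iff_compactSpace.1 (hqc W hW hWc)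
  have : LocallyConnectedSpace (f ⁻¹' W) := (hW.preimage hf).locallyConnectedSpace
  exact ⟨W, hW, hyW, hWU,
    hf.restrictPreimage.finite_connectedComponents_of_surjective (hsurj.restrictPreimage W)⟩
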